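/- There exist finite-alphabet random variables X_1, X_2, X_3, with X_1 and X_2 taking values in 9-element alphabets and X_3 in a 6-element alphabet, such that: (X_1, X_2, X_3) is uniformly distributed on a support of exactly 216 triples; (X_1, X_3) and (X_2, X_3) are each uniformly distributed on all 54 pairs; X_1 and X_2 are uniform on their 9-element alphabets; X_3 is uniform on its 6-element alphabet; and H(X_1, X_2) = log₂ ζ, where ζ = 54^{1/2} · 72^{1/4} · 108^{1/6} · 216^{1/12}. Consequently g = (log₂ 9, log₂ 9, log₂ 6, log₂ ζ, log₂ 54, log₂ 54, log₂ 216) is an entropy vector. -/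

import Mathlib

open Finset

/-- Probability that the discrete random variable `X` (on finite sample space `Fin N`
with probability mass function `p`) takes the value `a`. -/
noncomputable def pr {N : ℕ} (p : Fin N → ℝ) {A : Type} [DecidableEq A]
    (X : Fin N → A) (a : A) : ℝ :=
  ∑ ω, if X ω = a then p ω else 0

/-- Base-2 Shannon entropy of the random variable `X` under the pmf `p`. -/
noncomputable def ent {N : ℕ} (p : Fin N → ℝ) {A : Type} [Fintype A] [DecidableEq A]
    (X : Fin N → A) : ℝ :=
  -∑ a, pr p X a * Real.logb 2 (pr p X a)

/-- `p` is a probability mass function. -/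
def IsDist {N : ℕ} (p : Fin N → ℝ) : Prop :=
  (∀ ω, 0 ≤ p ω) ∧ ∑ ω, p ω = 1

/-- The entropy vector of three finite-alphabet random variables, with components
(H(X₁), H(X₂), H(X₃), H(X₁X₂), H(X₁X₃), H(X₂X₃), H(X₁X₂X₃)). -/
noncomputable def entVec3 {N a₁ a₂ a₃ : ℕ} (p : Fin N → ℝ)
    (X₁ : Fin N → Fin a₁) (X₂ : Fin N → Fin a₂) (X₃ : Fin N → Fin a₃) : Fin 7 → ℝ :=
  ![ent p X₁, ent p X₂, ent p X₃,
    ent p (fun ω => (X₁ ω, X₂ ω)),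
    ent p (fun ω => (X₁ ω, X₃ ω)),
    ent p (fun ω => (X₂ ω, X₃ ω)),
    ent p (fun ω => (X₁ ω, X₂ ω, X₃ ω))]

/-- `h ∈ ℝ⁷` is the entropy vector of some triple of finite-alphabet random variables. -/
def IsEntropic (h : Fin 7 → ℝ) : Prop :=
  ∃ (N a₁ a₂ a₃ : ℕ) (p : Fin N → ℝ)
    (X₁ : Fin N → Fin a₁) (X₂ : Fin N → Fin a₂) (X₃ : Fin N → Fin a₃),
    IsDist p ∧ entVec3 p X₁ X₂ X₃ = h

noncomputable def e1 : Fin 7 → ℝ := ![1,0,0,1,1,0,1]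
noncomputable def e2 : Fin 7 → ℝ := ![0,1,0,1,0,1,1]
noncomputable def e3 : Fin 7 → ℝ := ![0,0,1,0,1,1,1]
noncomputable def e12 : Fin 7 → ℝ := ![1,1,0,1,1,1,1]
noncomputable def e13 : Fin 7 → ℝ := ![1,0,1,1,1,1,1]
noncomputable def e23 : Fin 7 → ℝ := ![0,1,1,1,1,1,1]
noncomputable def e123 : Fin 7 → ℝ := ![1,1,1,1,1,1,1]
noncomputable def e123' : Fin 7 → ℝ := ![1,1,1,2,2,2,2]

noncomputable def zeta : ℝ :=
  (54:ℝ) ^ ((1:ℝ)/2) * (72:ℝ) ^ ((1:ℝ)/4) * (108:ℝ) ^ ((1:ℝ)/6) * (216:ℝ) ^ ((1:ℝ)/12)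

noncomputable def g : Fin 7 → ℝ :=
  ![Real.logb 2 9, Real.logb 2 9, Real.logb 2 6, Real.logb 2 zeta,
    Real.logb 2 54, Real.logb 2 54, Real.logb 2 216]

/-!
Take ω uniform on `Fin 216 ≃ Fin 6 × Fin 9 × Fin 4`, ω = 36 t + 4 i + k, and put `X₃ = t`,
`X₁ = i`, `X₂ = i - S_t(k)` in `ℤ/9`, where `S_t = shift t` are six 4-element subsets of `ℤ/9`.
Since `k ↦ S_t(k)` is injective, ω is recovered from `(X₁, X₂, X₃)`, and for fixed `t` both
`(i, k) ↦ i` and `(i, k) ↦ i - S_t(k)` are 4-to-1, so `(X₁, X₃)` and `(X₂, X₃)` are uniform on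
54 pairs; the marginals follow. The mass of `(X₁, X₂) = (i, j)` is the multiplicity of `i - j`
among the `S_t`, which is `4, 4, 4, 3, 3, 2, 2, 1, 1` for `i - j = 0, …, 8`; each difference
occurs for 9 pairs, so `H(X₁, X₂) = ½ log 54 + ¼ log 72 + ⅙ log 108 + 1/12 log 216 = log ζ`.
-/

section Entropy

variable {N : ℕ} {A B : Type} [DecidableEq A] [DecidableEq B]

lemma sum_pr [Fintype A] (p : Fin N → ℝ) (X : Fin N → A) : ∑ a, pr p X a = ∑ ω, p ω := by
  unfold pr
  rw [Finset.sum_comm]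
  simp

lemma sum_pr_prod_right [Fintype B] (p : Fin N → ℝ) (X : Fin N → A) (Y : Fin N → B) (a : A) :
    ∑ b, pr p (fun ω => (X ω, Y ω)) (a, b) = pr p X a := by
  unfold pr
  rw [Finset.sum_comm]
  refine Finset.sum_congr rfl fun ω _ => ?_
  by_cases h : X ω = a <;> simp [h]

lemma sum_pr_prod_left [Fintype A] (p : Fin N → ℝ) (X : Fin N → A) (Y : Fin N → B) (b : B) :
    ∑ a, pr p (fun ω => (X ω, Y ω)) (a, b) = pr p Y b := by
  unfold pr
  rw [Finset.sum_comm]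
  refine Finset.sum_congr rfl fun ω _ => ?_
  by_cases h : Y ω = b <;> simp [h]

lemma ent_eq_neg_logb_of_pr_eq_zero_or [Fintype A] {p : Fin N → ℝ} (hp : ∑ ω, p ω = 1)
    {X : Fin N → A} {q : ℝ} (hX : ∀ a, pr p X a = 0 ∨ pr p X a = q) :
    ent p X = -Real.logb 2 q := by
  have hterm : ∀ a, pr p X a * Real.logb 2 (pr p X a) = pr p X a * Real.logb 2 q := by
    intro a
    rcases hX a with h | h <;> simp [h]
  rw [ent, Finset.sum_congr rfl fun a _ => hterm a, ← Finset.sum_mul, sum_pr, hp, one_mul]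

lemma ent_eq_logb_of_pr_eq [Fintype A] {p : Fin N → ℝ} (hp : ∑ ω, p ω = 1)
    {X : Fin N → A} {n : ℝ} (hX : ∀ a, pr p X a = 1 / n) : ent p X = Real.logb 2 n := by
  rw [ent_eq_neg_logb_of_pr_eq_zero_or hp fun a => Or.inr (hX a), one_div, Real.logb_inv,
    neg_neg]

end Entropy

section Uniform

variable {N : ℕ} {A : Type} [DecidableEq A]

noncomputable def uniformPmf (N : ℕ) : Fin N → ℝ := fun _ => 1 / N

lemma isDist_uniformPmf [NeZero N] : IsDist (uniformPmf N) := by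
  refine ⟨fun _ => by unfold uniformPmf; positivity, ?_⟩
  simp [uniformPmf]

lemma pr_uniformPmf (X : Fin N → A) (a : A) :
    pr (uniformPmf N) X a = #{ω | X ω = a} / N := by
  simp only [pr, uniformPmf]
  rw [← Finset.sum_filter, Finset.sum_const, nsmul_eq_mul, mul_one_div]

lemma pr_uniformPmf_of_injective {X : Fin N → A} (hX : Function.Injective X) (a : A) :
    pr (uniformPmf N) X a = 0 ∨ pr (uniformPmf N) X a = 1 / N := by
  have hle : #{ω | X ω = a} ≤ 1 :=
    Finset.card_le_one.mpr fun ω hω ω' hω' => hX <| by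
      rw [(Finset.mem_filter.mp hω).2, (Finset.mem_filter.mp hω').2]
  rw [pr_uniformPmf]
  interval_cases #{ω | X ω = a} <;> simp

lemma support_pr_uniformPmf (X : Fin N → A) :
    {a | pr (uniformPmf N) X a ≠ 0} = Set.range X := by
  ext a
  rcases N.eq_zero_or_pos with rfl | hN
  · simp [pr]
  · rw [Set.mem_ofPred_eq, pr_uniformPmf, div_ne_zero_iff, Nat.cast_ne_zero, Finset.card_ne_zero,
      Finset.filter_nonempty_iff]
    simp [hN.ne']

lemma sum_prod_comp_sub {n : ℕ} [NeZero n] {M : Type*} [AddCommMonoid M] (f : Fin n → M) :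
    ∑ x : Fin n × Fin n, f (x.1 - x.2) = n • ∑ d, f d := by
  have hrow (i : Fin n) : ∑ j, f (i - j) = ∑ d, f d := (Equiv.subLeft i).sum_comp f
  simp [Fintype.sum_prod_type, hrow]

end Uniform

namespace ZetaExample

def shift : Fin 6 → Fin 4 → Fin 9 :=
  ![![0, 1, 2, 3], ![0, 1, 2, 4], ![0, 1, 2, 3], ![4, 5, 6, 7], ![0, 1, 2, 8], ![3, 4, 5, 6]]

def X₃ (ω : Fin 216) : Fin 6 := ⟨ω / 36, by omega⟩
def X₁ (ω : Fin 216) : Fin 9 := ⟨ω % 36 / 4, by omega⟩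
def shiftIndex (ω : Fin 216) : Fin 4 := ⟨ω % 4, by omega⟩
def X₂ (ω : Fin 216) : Fin 9 := X₁ ω - shift (X₃ ω) (shiftIndex ω)

def diffMult : Fin 9 → ℕ := ![4, 4, 4, 3, 3, 2, 2, 1, 1]

lemma shift_injective : ∀ t, Function.Injective (shift t) := by decide

lemma card_fiber_X₁X₃ : ∀ a : Fin 9 × Fin 6, #{ω | (X₁ ω, X₃ ω) = a} = 4 := by decide

lemma card_fiber_X₂X₃ : ∀ a : Fin 9 × Fin 6, #{ω | (X₂ ω, X₃ ω) = a} = 4 := by decide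

set_option maxRecDepth 2000 in
lemma card_fiber_X₁X₂ : ∀ a : Fin 9 × Fin 9,
    #{ω | (X₁ ω, X₂ ω) = a} = diffMult (a.1 - a.2) := by
  decide

lemma injective_X₁X₂X₃ : Function.Injective fun ω => (X₁ ω, X₂ ω, X₃ ω) := by
  intro ω ω' h
  simp only [Prod.mk.injEq] at h
  obtain ⟨h₁, h₂, h₃⟩ := h
  rw [X₂, X₂, h₁, h₃, sub_right_inj] at h₂
  have hk := congrArg Fin.val (shift_injective _ h₂)
  simp only [X₁, X₃, shiftIndex, Fin.mk.injEq] at h₁ h₃ hk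
  omega

lemma pr_X₁X₃ (a : Fin 9 × Fin 6) : pr (uniformPmf 216) (fun ω => (X₁ ω, X₃ ω)) a = 1 / 54 := by
  rw [pr_uniformPmf, card_fiber_X₁X₃]; norm_num

lemma pr_X₂X₃ (a : Fin 9 × Fin 6) : pr (uniformPmf 216) (fun ω => (X₂ ω, X₃ ω)) a = 1 / 54 := by
  rw [pr_uniformPmf, card_fiber_X₂X₃]; norm_num

lemma pr_X₁ (a : Fin 9) : pr (uniformPmf 216) X₁ a = 1 / 9 := by
  rw [← sum_pr_prod_right _ X₁ X₃, Finset.sum_congr rfl fun b _ => pr_X₁X₃ (a, b)]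
  norm_num

lemma pr_X₂ (a : Fin 9) : pr (uniformPmf 216) X₂ a = 1 / 9 := by
  rw [← sum_pr_prod_right _ X₂ X₃, Finset.sum_congr rfl fun b _ => pr_X₂X₃ (a, b)]
  norm_num

lemma pr_X₃ (a : Fin 6) : pr (uniformPmf 216) X₃ a = 1 / 6 := by
  rw [← sum_pr_prod_left _ X₁ X₃, Finset.sum_congr rfl fun b _ => pr_X₁X₃ (b, a)]
  norm_num

lemma logb_zeta : Real.logb 2 zeta = Real.logb 2 54 / 2 + Real.logb 2 72 / 4
      + Real.logb 2 108 / 6 + Real.logb 2 216 / 12 := by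
  have hrpow (x y : ℝ) (hx : 0 < x) : Real.logb 2 (x ^ y) = y * Real.logb 2 x :=
    Real.logb_rpow_eq_mul_logb_of_pos hx
  rw [zeta, Real.logb_mul (by positivity) (by positivity),
    Real.logb_mul (by positivity) (by positivity), Real.logb_mul (by positivity) (by positivity),
    hrpow _ _ (by norm_num), hrpow _ _ (by norm_num), hrpow _ _ (by norm_num),
    hrpow _ _ (by norm_num)]
  ring

lemma sum_comp_diffMult {M : Type*} [AddCommMonoid M] (F : ℕ → M) :
    ∑ d, F (diffMult d) = 3 • F 4 + 2 • F 3 + 2 • F 2 + 2 • F 1 := by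
  simp only [Fin.sum_univ_succ, Fin.sum_univ_zero, diffMult, Matrix.cons_val_zero,
    Matrix.cons_val_succ]
  abel

lemma ent_X₁X₂ : ent (uniformPmf 216) (fun ω => (X₁ ω, X₂ ω)) = Real.logb 2 zeta := by
  have hpr (x : Fin 9 × Fin 9) : pr (uniformPmf 216) (fun ω => (X₁ ω, X₂ ω)) x =
      diffMult (x.1 - x.2) / 216 := by
    rw [pr_uniformPmf, card_fiber_X₁X₂, Nat.cast_ofNat]
  rw [ent, Finset.sum_congr rfl fun x _ => by rw [hpr x],
    sum_prod_comp_sub fun d => (diffMult d : ℝ) / 216 * Real.logb 2 (diffMult d / 216),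
    sum_comp_diffMult fun k => (k : ℝ) / 216 * Real.logb 2 (k / 216), logb_zeta]
  norm_num [show (4 : ℝ) / 216 = 54⁻¹ by norm_num, show (3 : ℝ) / 216 = 72⁻¹ by norm_num,
    show (2 : ℝ) / 216 = 108⁻¹ by norm_num]
  simp only [one_div, Real.logb_inv]
  ring

lemma entVec3_eq_g : entVec3 (uniformPmf 216) X₁ X₂ X₃ = g := by
  have hp := (isDist_uniformPmf (N := 216)).2
  rw [entVec3, ent_eq_logb_of_pr_eq hp pr_X₁, ent_eq_logb_of_pr_eq hp pr_X₂,
    ent_eq_logb_of_pr_eq hp pr_X₃, ent_X₁X₂, ent_eq_logb_of_pr_eq hp pr_X₁X₃,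
    ent_eq_logb_of_pr_eq hp pr_X₂X₃,
    ent_eq_neg_logb_of_pr_eq_zero_or hp (pr_uniformPmf_of_injective injective_X₁X₂X₃), g,
    one_div, Real.logb_inv, neg_neg, Nat.cast_ofNat]

end ZetaExample

/-- There are finite-alphabet random variables X₁, X₂ (on 9-element alphabets) and X₃
(on a 6-element alphabet) with joint distribution uniform on a support of exactly 216
triples, (X₁,X₃) and (X₂,X₃) uniform on all 54 pairs, X₁, X₂ uniform on 9 values, X₃
uniform on 6 values, and H(X₁,X₂) = log₂ ζ. Consequently g is an entropy vector. -/
theorem stmt11 :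
    (∃ (N : ℕ) (p : Fin N → ℝ) (X₁ X₂ : Fin N → Fin 9) (X₃ : Fin N → Fin 6),
      IsDist p ∧
      {x | pr p (fun ω => (X₁ ω, X₂ ω, X₃ ω)) x ≠ 0}.ncard = 216 ∧
      (∀ x, pr p (fun ω => (X₁ ω, X₂ ω, X₃ ω)) x = 0 ∨
            pr p (fun ω => (X₁ ω, X₂ ω, X₃ ω)) x = 1/216) ∧
      (∀ x, pr p (fun ω => (X₁ ω, X₃ ω)) x = 1/54) ∧
      (∀ x, pr p (fun ω => (X₂ ω, X₃ ω)) x = 1/54) ∧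
      (∀ a, pr p X₁ a = 1/9) ∧ (∀ a, pr p X₂ a = 1/9) ∧ (∀ a, pr p X₃ a = 1/6) ∧
      ent p (fun ω => (X₁ ω, X₂ ω)) = Real.logb 2 zeta ∧
      entVec3 p X₁ X₂ X₃ = g) ∧
    IsEntropic g := by
  open ZetaExample in
  have hp : IsDist (uniformPmf 216) := isDist_uniformPmf
  refine ⟨⟨216, uniformPmf 216, X₁, X₂, X₃, hp, ?_, ?_, pr_X₁X₃, pr_X₂X₃, pr_X₁, pr_X₂, pr_X₃,
    ent_X₁X₂, entVec3_eq_g⟩, 216, 9, 9, 6, uniformPmf 216, X₁, X₂, X₃, hp, entVec3_eq_g⟩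
  · rw [support_pr_uniformPmf, Set.ncard_range_of_injective injective_X₁X₂X₃, Nat.card_fin]
  · simpa using pr_uniformPmf_of_injective injective_X₁X₂X₃
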